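/- Let α > 1, b > 0, θ > 0, and define G(β) = (1 + b²β²/θ²)² − (4b²/θ²) β (1 + b²β²/θ²) tan(β/2) − 1/α on (0, π). Then G'(β) ≤ −(b²/(2θ⁴))[(θ² + 8b²)β³ + b²β⁵] < 0 on (0, π), G(0⁺) = 1 − 1/α > 0, G(β) → −∞ as β → π⁻, and G has a unique zero in (0, π). -/

import Mathlib

/-!
Since `tan x ≥ x` and `sec² x = 1 + tan² x ≥ 1 + x²` on `(0, π/2)`, replacing `tan (β/2)` and
`sec² (β/2)` in `G'` by these lower bounds leaves an explicit negative polynomial, so `G` is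
strictly decreasing on `(0, π)`. It is continuous at `0` with `G 0 = 1 - 1/α > 0`, and tends to
`-∞` at `π⁻` because `tan (β/2)` does; the intermediate value theorem gives the unique zero.
-/

open Real Set Filter Topology

/-- `G` of the statement, with `c = b²/θ²` and `d = 1/α`. -/
noncomputable def phaseFun (c d β : ℝ) : ℝ :=
  (1 + c * β ^ 2) ^ 2 - 4 * c * β * (1 + c * β ^ 2) * tan (β / 2) - d

lemma hasDerivAt_tan_half {β : ℝ} (hβ : β ∈ Ioo (-π) π) :
    HasDerivAt (fun x => tan (x / 2)) (1 / cos (β / 2) ^ 2 / 2) β := by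
  have hcos : cos (β / 2) ≠ 0 :=
    (cos_pos_of_mem_Ioo ⟨by linarith [hβ.1], by linarith [hβ.2]⟩).ne'
  simpa [Function.comp_def, div_eq_mul_inv] using
    (hasDerivAt_tan hcos).comp β ((hasDerivAt_id β).div_const 2)

lemma hasDerivAt_phaseFun (c d : ℝ) {β : ℝ} (hβ : β ∈ Ioo (-π) π) :
    HasDerivAt (phaseFun c d)
      (4 * c * β * (1 + c * β ^ 2) - 4 * c * (1 + 3 * c * β ^ 2) * tan (β / 2)
        - 2 * c * β * (1 + c * β ^ 2) * (1 / cos (β / 2) ^ 2)) β := by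
  have hA : HasDerivAt (fun x => 1 + c * x ^ 2) (2 * c * β) β := by
    refine (((hasDerivAt_pow 2 β).const_mul c).const_add 1).congr_deriv ?_
    norm_num; ring
  have hB : HasDerivAt (fun x => 4 * c * x * (1 + c * x ^ 2)) (4 * c * (1 + 3 * c * β ^ 2)) β := by
    refine (((hasDerivAt_id β).const_mul (4 * c)).mul hA).congr_deriv ?_
    simp only [id_eq]; ring
  refine (((hA.pow 2).sub (hB.mul (hasDerivAt_tan_half hβ))).sub_const d).congr_deriv ?_
  norm_num
  ring

lemma continuousOn_phaseFun (c d : ℝ) : ContinuousOn (phaseFun c d) (Ioo (-π) π) :=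
  fun _ hβ => (hasDerivAt_phaseFun c d hβ).continuousAt.continuousWithinAt

lemma deriv_phaseFun_le {c : ℝ} (hc : 0 ≤ c) (d : ℝ) {β : ℝ} (hβ : β ∈ Ioo 0 π) :
    deriv (phaseFun c d) β ≤ -(c / 2) * ((1 + 8 * c) * β ^ 3 + c * β ^ 5) := by
  obtain ⟨hβ0, hβπ⟩ := hβ
  rw [(hasDerivAt_phaseFun c d ⟨by linarith, hβπ⟩).deriv]
  have hcos : 0 < cos (β / 2) := cos_pos_of_mem_Ioo ⟨by linarith, by linarith⟩
  have htan : β / 2 ≤ tan (β / 2) := (lt_tan (by linarith) (by linarith)).le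
  have hsec : 1 + (β / 2) ^ 2 ≤ 1 / cos (β / 2) ^ 2 := by
    rw [one_div, ← inv_one_add_tan_sq hcos.ne', inv_inv]
    nlinarith
  have h1 : 4 * c * (1 + 3 * c * β ^ 2) * (β / 2) ≤ 4 * c * (1 + 3 * c * β ^ 2) * tan (β / 2) :=
    mul_le_mul_of_nonneg_left htan (by positivity)
  have h2 : 2 * c * β * (1 + c * β ^ 2) * (1 + (β / 2) ^ 2)
      ≤ 2 * c * β * (1 + c * β ^ 2) * (1 / cos (β / 2) ^ 2) :=
    mul_le_mul_of_nonneg_left hsec (by positivity)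
  linarith

lemma phaseFun_zero (c d : ℝ) : phaseFun c d 0 = 1 - d := by
  simp [phaseFun]

lemma tendsto_phaseFun_nhdsGT_zero (c d : ℝ) :
    Tendsto (phaseFun c d) (𝓝[>] 0) (𝓝 (1 - d)) := by
  rw [← phaseFun_zero c d]
  exact (hasDerivAt_phaseFun c d ⟨by linarith [pi_pos], pi_pos⟩).continuousAt.continuousWithinAt

lemma tendsto_tan_half_nhdsLT_pi : Tendsto (fun β => tan (β / 2)) (𝓝[<] π) atTop := by
  refine tendsto_tan_pi_div_two.comp (tendsto_nhdsWithin_iff.2 ⟨?_, ?_⟩)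
  · exact ((continuous_id.div_const 2).tendsto π).mono_left nhdsWithin_le_nhds
  · filter_upwards [self_mem_nhdsWithin] with β (hβ : β < π)
    exact (div_lt_div_iff_of_pos_right two_pos).2 hβ

lemma tendsto_phaseFun_nhdsLT_pi {c : ℝ} (hc : 0 < c) (d : ℝ) :
    Tendsto (phaseFun c d) (𝓝[<] π) atBot := by
  have hcoef : Tendsto (fun β => 4 * c * β * (1 + c * β ^ 2)) (𝓝[<] π)
      (𝓝 (4 * c * π * (1 + c * π ^ 2))) :=
    ((by fun_prop : Continuous fun β : ℝ => 4 * c * β * (1 + c * β ^ 2)).tendsto π).mono_left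
      nhdsWithin_le_nhds
  have hrest : Tendsto (fun β => (1 + c * β ^ 2) ^ 2 - d) (𝓝[<] π)
      (𝓝 ((1 + c * π ^ 2) ^ 2 - d)) :=
    ((by fun_prop : Continuous fun β : ℝ => (1 + c * β ^ 2) ^ 2 - d).tendsto π).mono_left
      nhdsWithin_le_nhds
  have hprod := (hcoef.pos_mul_atTop (by positivity) tendsto_tan_half_nhdsLT_pi)
  refine (hrest.add_atBot (tendsto_neg_atTop_atBot.comp hprod)).congr fun β => ?_
  simp only [phaseFun, Function.comp_apply]
  ring

lemma existsUnique_eq_zero_of_strictAntiOn {f : ℝ → ℝ} {a b L : ℝ} (hab : a < b)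
    (hf : ContinuousOn f (Ioo a b)) (hanti : StrictAntiOn f (Ioo a b)) (hL : 0 < L)
    (ha : Tendsto f (𝓝[>] a) (𝓝 L)) (hb : Tendsto f (𝓝[<] b) atBot) :
    ∃! x, x ∈ Ioo a b ∧ f x = 0 := by
  obtain ⟨x₁, hx₁pos, hx₁⟩ :=
    ((ha.eventually (eventually_gt_nhds hL)).and (Ioo_mem_nhdsGT hab)).exists
  obtain ⟨x₂, hx₂neg, hx₂⟩ :=
    ((hb.eventually (eventually_lt_atBot 0)).and (Ioo_mem_nhdsLT hx₁.2)).exists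
  have hsub : Icc x₁ x₂ ⊆ Ioo a b := Icc_subset_Ioo hx₁.1 hx₂.2
  obtain ⟨x, hx, hfx⟩ :=
    intermediate_value_Icc' hx₂.1.le (hf.mono hsub) ⟨hx₂neg.le, hx₁pos.le⟩
  exact ⟨x, ⟨hsub hx, hfx⟩, fun y ⟨hy, hfy⟩ => hanti.injOn hy (hsub hx) (hfy.trans hfx.symm)⟩

theorem stmt11 (α b θ : ℝ) (hα : 1 < α) (hb : 0 < b) (hθ : 0 < θ)
    (G : ℝ → ℝ)
    (hG : ∀ β, G β = (1 + b^2 * β^2 / θ^2)^2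
        - (4 * b^2 / θ^2) * β * (1 + b^2 * β^2 / θ^2) * Real.tan (β / 2) - 1 / α) :
    (∀ β ∈ Ioo 0 π,
      deriv G β ≤ -(b^2 / (2 * θ^4)) * ((θ^2 + 8 * b^2) * β^3 + b^2 * β^5) ∧
      -(b^2 / (2 * θ^4)) * ((θ^2 + 8 * b^2) * β^3 + b^2 * β^5) < 0) ∧
    Filter.Tendsto G (nhdsWithin 0 (Ioi 0)) (nhds (1 - 1 / α)) ∧
    0 < 1 - 1 / α ∧
    Filter.Tendsto G (nhdsWithin π (Iio π)) Filter.atBot ∧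
    ∃! β, β ∈ Ioo 0 π ∧ G β = 0 := by
  have hc : 0 < b ^ 2 / θ ^ 2 := by positivity
  obtain rfl : G = phaseFun (b ^ 2 / θ ^ 2) (1 / α) := funext fun β => by
    rw [hG, phaseFun]; ring
  have hderiv : ∀ β ∈ Ioo 0 π,
      deriv (phaseFun (b ^ 2 / θ ^ 2) (1 / α)) β
        ≤ -(b^2 / (2 * θ^4)) * ((θ^2 + 8 * b^2) * β^3 + b^2 * β^5) ∧
      -(b^2 / (2 * θ^4)) * ((θ^2 + 8 * b^2) * β^3 + b^2 * β^5) < 0 := fun β hβ => by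
    have hβ0 := hβ.1
    refine ⟨(deriv_phaseFun_le hc.le _ hβ).trans_eq ?_, ?_⟩
    · field_simp
    · rw [neg_mul, neg_lt_zero]; positivity
  have hlim : 0 < 1 - 1 / α := by
    rw [sub_pos, div_lt_one (by linarith)]; exact hα
  have hcont : ContinuousOn (phaseFun (b ^ 2 / θ ^ 2) (1 / α)) (Ioo 0 π) :=
    (continuousOn_phaseFun _ _).mono (Ioo_subset_Ioo_left (by linarith [pi_pos]))
  have hanti : StrictAntiOn (phaseFun (b ^ 2 / θ ^ 2) (1 / α)) (Ioo 0 π) :=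
    strictAntiOn_of_deriv_neg (convex_Ioo 0 π) hcont fun β hβ => by
      rw [interior_Ioo] at hβ
      exact (hderiv β hβ).1.trans_lt (hderiv β hβ).2
  exact ⟨hderiv, tendsto_phaseFun_nhdsGT_zero _ _, hlim, tendsto_phaseFun_nhdsLT_pi hc _,
    existsUnique_eq_zero_of_strictAntiOn pi_pos hcont hanti hlim
      (tendsto_phaseFun_nhdsGT_zero _ _) (tendsto_phaseFun_nhdsLT_pi hc _)⟩
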